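/- arXiv:math/0504425 — 6 statements merged into one kernel-verified Lean document; each statement's English description precedes it below -/
import Mathlib

section
/- Let K = ℂ(x₁,…,xₙ) and let q₁(λ), q₂(λ) ∈ K[λ]. If, with respect to a compatible total ordering ⪯^ρ, 1/q₁(λ) is PT^ρ in λ and 1/q₂(λ) is NT^ρ in λ, then q₁(λ) and q₂(λ) have no nontrivial common divisor in K[λ], i.e., they are relatively prime. -/
open scoped Classical

noncomputable section

/-- The field `K = ℂ(x₁, …, xₙ)` of rational functions in the `x`-variables. -/
abbrev RatField (n : ℕ) := FractionRing (MvPolynomial (Fin n) ℂ)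

/-- Keep only the coefficients of a Hahn series at indices satisfying `P`; with
`P g = ((e g).1 = 0)` this is the constant-term operator `CT_λ` of a Malcev–Neumann
series. -/
def ctFilter {Γ : Type} [AddCommGroup Γ] [LinearOrder Γ] [IsOrderedAddMonoid Γ] (P : Γ → Prop)
    (F : HahnSeries Γ ℂ) : HahnSeries Γ ℂ where
  coeff g := if P g then F.coeff g else 0
  isPWO_support' := F.isPWO_support'.mono (fun g hg => by
    simp only [Function.mem_support, ne_eq] at hg ⊢
    intro h0
    exact hg (by simp [h0]))

/-- The monomial `λ^a·x^v` in the Malcev–Neumann field `ℂ^ρ⟪λ, x⟫`, realized as the Hahn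
series field over a linearly ordered abelian group `Γ` identified with the exponent group
`ℤ × ℤⁿ` (first coordinate: exponent of `λ`). -/
def mnMonomial (n : ℕ) (Γ : Type) [AddCommGroup Γ] [LinearOrder Γ] [IsOrderedAddMonoid Γ]
    (e : Γ ≃+ ℤ × (Fin n → ℤ)) (a : ℤ) (v : Fin n → ℤ) : HahnSeries Γ ℂ :=
  HahnSeries.single (e.symm (a, v)) 1

/-- `Φ : K → ℂ^ρ⟪λ, x⟫` is the canonical embedding of the rational function field
`K = ℂ(x₁, …, xₙ)` into the Malcev–Neumann field: it fixes the scalars `ℂ` and sends each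
`xᵢ` to the corresponding monomial.  (Such a ring homomorphism exists and is unique, and
it sends each rational function to its Malcev–Neumann series expansion.) -/
def IsExpansionHom (n : ℕ) (Γ : Type) [AddCommGroup Γ] [LinearOrder Γ] [IsOrderedAddMonoid Γ]
    (e : Γ ≃+ ℤ × (Fin n → ℤ)) (Φ : RatField n →+* HahnSeries Γ ℂ) : Prop :=
  (∀ c : ℂ, Φ (algebraMap (MvPolynomial (Fin n) ℂ) (RatField n) (MvPolynomial.C c)) =
      HahnSeries.C c) ∧
  (∀ i : Fin n, Φ (algebraMap (MvPolynomial (Fin n) ℂ) (RatField n) (MvPolynomial.X i)) =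
      mnMonomial n Γ e 0 (Pi.single i 1))

/-- The Malcev–Neumann expansion of a polynomial `q ∈ K[λ]`: coefficients are expanded by
`Φ` and `λ` is sent to its monomial. -/
def mnExpand (n : ℕ) (Γ : Type) [AddCommGroup Γ] [LinearOrder Γ] [IsOrderedAddMonoid Γ]
    (e : Γ ≃+ ℤ × (Fin n → ℤ)) (Φ : RatField n →+* HahnSeries Γ ℂ)
    (q : Polynomial (RatField n)) : HahnSeries Γ ℂ :=
  Polynomial.eval₂ Φ (mnMonomial n Γ e 1 0) q

/-- `1/q(λ)` is `PT^ρ` in `λ`: its Malcev–Neumann expansion contains only nonnegative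
powers of `λ`. -/
def IsPT (n : ℕ) (Γ : Type) [AddCommGroup Γ] [LinearOrder Γ] [IsOrderedAddMonoid Γ]
    (e : Γ ≃+ ℤ × (Fin n → ℤ)) (Φ : RatField n →+* HahnSeries Γ ℂ)
    (q : Polynomial (RatField n)) : Prop :=
  ∀ g : Γ, ((mnExpand n Γ e Φ q)⁻¹).coeff g ≠ 0 → 0 ≤ (e g).1

/-- `1/q(λ)` is `NT^ρ` in `λ`: its Malcev–Neumann expansion contains only negative powers
of `λ`. -/
def IsNT (n : ℕ) (Γ : Type) [AddCommGroup Γ] [LinearOrder Γ] [IsOrderedAddMonoid Γ]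
    (e : Γ ≃+ ℤ × (Fin n → ℤ)) (Φ : RatField n →+* HahnSeries Γ ℂ)
    (q : Polynomial (RatField n)) : Prop :=
  ∀ g : Γ, ((mnExpand n Γ e Φ q)⁻¹).coeff g ≠ 0 → (e g).1 < 0

/-- `q(λ) ∈ K[λ]` is `ρ`-factorable: `q = q₁q₂` where `1/q₁` is `PT^ρ` and `1/q₂` is
`NT^ρ` in `λ`. -/
def IsRhoFactorable (n : ℕ) (Γ : Type) [AddCommGroup Γ] [LinearOrder Γ] [IsOrderedAddMonoid Γ]
    (e : Γ ≃+ ℤ × (Fin n → ℤ)) (Φ : RatField n →+* HahnSeries Γ ℂ)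
    (q : Polynomial (RatField n)) : Prop :=
  ∃ q₁ q₂ : Polynomial (RatField n), q = q₁ * q₂ ∧ q₁ ≠ 0 ∧ q₂ ≠ 0 ∧
    IsPT n Γ e Φ q₁ ∧ IsNT n Γ e Φ q₂

/-- `CT_{λ=0} F`: the coefficient of `λ⁰` of the expansion of `F ∈ K(λ)` in the Laurent
series field `K((λ))`. -/
def ctZero (n : ℕ) (F : RatFunc (RatField n)) : RatField n :=
  (F : LaurentSeries (RatField n)).coeff 0

/-- `CT_{λ=∞} F`: the coefficient of `λ⁰` of the expansion of `F ∈ K(λ)` in `K((λ⁻¹))`,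
i.e. `CT_{λ=0}` of `F(λ⁻¹)`. -/
def ctInfty (n : ℕ) (F : RatFunc (RatField n)) : RatField n :=
  ctZero n (RatFunc.eval (algebraMap (RatField n) (RatFunc (RatField n))) (RatFunc.X)⁻¹ F)

/-!
Let `d = gcd(q₁, q₂)`, `q₁ = d r₁`, `q₂ = d r₂`. Expansions of elements of `K` involve no `λ`, so
`1/d = r₁ · (1/q₁)` contains only nonnegative powers of `λ`, while `1/d = r₂ · (1/q₂)` contains
only powers below `deg r₂`. The top `λ`-components of `d` and of `1/d` then multiply to the top
`λ`-component of `d · (1/d) = 1`, which sits in `λ`-degree `0`; hence `deg d = 0`.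
-/

open HahnSeries

namespace HahnSeries

variable {Γ : Type*} {R : Type*} [AddCommGroup Γ] [LinearOrder Γ] [IsOrderedAddMonoid Γ]

lemma exists_deg_eq_add_of_mem_support_mul [NonUnitalNonAssocSemiring R] (deg : Γ →+ ℤ)
    {F G : HahnSeries Γ R} {g : Γ} (hg : g ∈ (F * G).support) :
    ∃ u ∈ F.support, ∃ v ∈ G.support, deg g = deg u + deg v := by
  obtain ⟨u, hu, v, hv, rfl⟩ := support_mul_subset hg
  exact ⟨u, hu, v, hv, map_add deg u v⟩

/-- Series supported on `ker deg`, taken as the image of the Hahn series over `ker deg`, so that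
closure under inverses comes for free. -/
def degreeZeroSubfield [Field R] (deg : Γ →+ ℤ) : Subfield (HahnSeries Γ R) :=
  (embDomainRingHom deg.ker.subtype Subtype.val_injective fun _ _ => Iff.rfl).fieldRange

variable [Field R] {deg : Γ →+ ℤ}

lemma deg_eq_zero_of_mem_degreeZeroSubfield {F : HahnSeries Γ R}
    (hF : F ∈ degreeZeroSubfield deg) {g : Γ} (hg : g ∈ F.support) : deg g = 0 := by
  obtain ⟨F₀, rfl⟩ := hF
  obtain ⟨h, -, rfl⟩ := support_embDomain_subset hg
  exact h.2

lemma single_mem_degreeZeroSubfield {g : Γ} (hg : deg g = 0) (r : R) :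
    single g r ∈ degreeZeroSubfield deg :=
  ⟨single ⟨g, hg⟩ r, embDomain_single.trans rfl⟩

end HahnSeries

section CtFilter

variable {Γ : Type} [AddCommGroup Γ] [LinearOrder Γ] [IsOrderedAddMonoid Γ]

lemma ctFilter_coeff (P : Γ → Prop) (F : HahnSeries Γ ℂ) (g : Γ) :
    (ctFilter P F).coeff g = if P g then F.coeff g else 0 := rfl

lemma ctFilter_add (P : Γ → Prop) (F G : HahnSeries Γ ℂ) :
    ctFilter P (F + G) = ctFilter P F + ctFilter P G := by
  ext g
  simp only [ctFilter_coeff, HahnSeries.coeff_add]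
  split_ifs <;> simp

lemma ctFilter_sum {ι : Type*} (P : Γ → Prop) (s : Finset ι) (F : ι → HahnSeries Γ ℂ) :
    ctFilter P (∑ i ∈ s, F i) = ∑ i ∈ s, ctFilter P (F i) :=
  map_sum (AddMonoidHom.mk' (ctFilter P) (ctFilter_add P)) F s

lemma ctFilter_add_ctFilter_not (P : Γ → Prop) (F : HahnSeries Γ ℂ) :
    ctFilter P F + ctFilter (fun g => ¬ P g) F = F := by
  ext g
  simp only [HahnSeries.coeff_add, ctFilter_coeff]
  split_ifs <;> simp_all

lemma mem_support_ctFilter {P : Γ → Prop} {F : HahnSeries Γ ℂ} {g : Γ}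
    (hg : g ∈ (ctFilter P F).support) : P g ∧ g ∈ F.support := by
  rw [mem_support, ctFilter_coeff] at hg
  split_ifs at hg with hP
  · exact ⟨hP, hg⟩
  · exact absurd rfl hg

lemma ctFilter_eq_self {P : Γ → Prop} {F : HahnSeries Γ ℂ} (h : ∀ g ∈ F.support, P g) :
    ctFilter P F = F := by
  ext g
  rw [ctFilter_coeff]
  split_ifs with hg
  · rfl
  · exact (not_not.mp fun hF => hg (h g hF)).symm

lemma ctFilter_eq_zero {P : Γ → Prop} {F : HahnSeries Γ ℂ} (h : ∀ g ∈ F.support, ¬ P g) :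
    ctFilter P F = 0 := by
  ext g
  rw [ctFilter_coeff, HahnSeries.coeff_zero]
  split_ifs with hg
  · exact not_not.mp fun hF => h g hF hg
  · rfl

end CtFilter

section Degree

variable {Γ : Type} [AddCommGroup Γ] [LinearOrder Γ] [IsOrderedAddMonoid Γ] {deg : Γ →+ ℤ}

lemma ctFilter_mul_of_deg_le {F G : HahnSeries Γ ℂ} {a b : ℤ}
    (hF : ∀ g ∈ F.support, deg g ≤ a) (hG : ∀ g ∈ G.support, deg g ≤ b) :
    ctFilter (fun g => deg g = a + b) (F * G) =
      ctFilter (fun g => deg g = a) F * ctFilter (fun g => deg g = b) G := by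
  set Fa := ctFilter (fun g => deg g = a) F
  set Fr := ctFilter (fun g => ¬ deg g = a) F
  set Gb := ctFilter (fun g => deg g = b) G
  set Gr := ctFilter (fun g => ¬ deg g = b) G
  have hFa (u) (hu : u ∈ Fa.support) : deg u = a := (mem_support_ctFilter hu).1
  have hGb (v) (hv : v ∈ Gb.support) : deg v = b := (mem_support_ctFilter hv).1
  have hFr (u) (hu : u ∈ Fr.support) : deg u < a :=
    (hF u (mem_support_ctFilter hu).2).lt_of_ne (mem_support_ctFilter hu).1
  have hGr (v) (hv : v ∈ Gr.support) : deg v < b :=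
    (hG v (mem_support_ctFilter hv).2).lt_of_ne (mem_support_ctFilter hv).1
  have hsplit : F * G = Fa * Gb + (Fa * Gr + Fr * Gb + Fr * Gr) := by
    rw [← ctFilter_add_ctFilter_not (fun g => deg g = a) F,
      ← ctFilter_add_ctFilter_not (fun g => deg g = b) G]
    ring
  have hlower : ctFilter (fun g => deg g = a + b) (Fa * Gr + Fr * Gb + Fr * Gr) = 0 := by
    refine ctFilter_eq_zero fun g hg => ?_
    rcases support_add_subset _ _ hg with hg | hg
    · rcases support_add_subset _ _ hg with hg | hg
      all_goals obtain ⟨u, hu, v, hv, huv⟩ := exists_deg_eq_add_of_mem_support_mul deg hg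
      · linarith [hFa u hu, hGr v hv]
      · linarith [hFr u hu, hGb v hv]
    · obtain ⟨u, hu, v, hv, huv⟩ := exists_deg_eq_add_of_mem_support_mul deg hg
      linarith [hFr u hu, hGr v hv]
  rw [hsplit, ctFilter_add, hlower, add_zero]
  refine ctFilter_eq_self fun g hg => ?_
  obtain ⟨u, hu, v, hv, huv⟩ := exists_deg_eq_add_of_mem_support_mul deg hg
  rw [huv, hFa u hu, hGb v hv]

lemma exists_mem_support_of_ctFilter_ne_zero {P : Γ → Prop} {F : HahnSeries Γ ℂ}
    (h : ctFilter P F ≠ 0) : ∃ g ∈ F.support, P g := by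
  by_contra! hP
  exact h (ctFilter_eq_zero hP)

lemma exists_ctFilter_ne_zero_of_bddAbove {F : HahnSeries Γ ℂ} (hF : F ≠ 0)
    (hbdd : BddAbove (deg '' F.support)) :
    ∃ t : ℤ, (∀ g ∈ F.support, deg g ≤ t) ∧ ctFilter (fun g => deg g = t) F ≠ 0 := by
  obtain ⟨g₀, hg₀⟩ := support_nonempty_iff.mpr hF
  obtain ⟨N, hN⟩ := hbdd
  obtain ⟨_, ⟨g, hg, rfl⟩, hmax⟩ := Int.exists_greatest_of_bdd (P := (· ∈ deg '' F.support))
    ⟨N, fun _ hz => hN hz⟩ ⟨_, g₀, hg₀, rfl⟩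
  refine ⟨deg g, fun g' hg' => hmax _ ⟨g', hg', rfl⟩, fun h => hg ?_⟩
  simpa [ctFilter_coeff] using congrArg (coeff · g) h

lemma exists_deg_eq_neg_of_mul_eq_one {F G : HahnSeries Γ ℂ} (hFG : F * G = 1) {a : ℤ}
    (hF : ∀ g ∈ F.support, deg g ≤ a) (hFa : ctFilter (fun g => deg g = a) F ≠ 0)
    (hG : BddAbove (deg '' G.support)) : ∃ g ∈ G.support, deg g = -a := by
  obtain ⟨t, ht, hGt⟩ := exists_ctFilter_ne_zero_of_bddAbove (right_ne_zero_of_mul_eq_one hFG) hG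
  have htop := ctFilter_mul_of_deg_le hF ht
  rw [hFG] at htop
  obtain ⟨g, hg, hdeg⟩ := exists_mem_support_of_ctFilter_ne_zero (htop ▸ mul_ne_zero hFa hGt)
  rw [support_one, Set.mem_singleton_iff] at hg
  obtain ⟨g', hg', rfl⟩ := exists_mem_support_of_ctFilter_ne_zero hGt
  exact ⟨g', hg', by rw [hg, map_zero] at hdeg; omega⟩

end Degree

def lamDeg {n : ℕ} {Γ : Type*} [AddCommGroup Γ] (e : Γ ≃+ ℤ × (Fin n → ℤ)) : Γ →+ ℤ :=
  (AddMonoidHom.fst ℤ (Fin n → ℤ)).comp e.toAddMonoidHom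

@[simp]
lemma lamDeg_apply {n : ℕ} {Γ : Type*} [AddCommGroup Γ] (e : Γ ≃+ ℤ × (Fin n → ℤ)) (g : Γ) :
    lamDeg e g = (e g).1 := rfl

section Expansion

open Polynomial

variable {n : ℕ} {Γ : Type} [AddCommGroup Γ] [LinearOrder Γ] [IsOrderedAddMonoid Γ]
  {e : Γ ≃+ ℤ × (Fin n → ℤ)} {Φ : RatField n →+* HahnSeries Γ ℂ}

lemma IsExpansionHom.mem_degreeZeroSubfield (hΦ : IsExpansionHom n Γ e Φ) (c : RatField n) :
    Φ c ∈ degreeZeroSubfield (lamDeg e) := by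
  have hpoly (a : MvPolynomial (Fin n) ℂ) :
      Φ (algebraMap _ _ a) ∈ degreeZeroSubfield (lamDeg e) := by
    induction a using MvPolynomial.induction_on with
    | C c => rw [hΦ.1 c]; exact single_mem_degreeZeroSubfield (map_zero _) c
    | add p q hp hq => rw [map_add, map_add]; exact add_mem hp hq
    | mul_X p i hp =>
      rw [map_mul, map_mul, hΦ.2 i]
      exact mul_mem hp (single_mem_degreeZeroSubfield (by simp) 1)
  obtain ⟨a, b, -, rfl⟩ := IsFractionRing.div_surjective (MvPolynomial (Fin n) ℂ) c
  rw [map_div₀]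
  exact div_mem (hpoly a) (hpoly b)

lemma lamDeg_eq_of_mem_support_term (hΦ : IsExpansionHom n Γ e Φ) (c : RatField n) (j : ℕ)
    {g : Γ} (hg : g ∈ (Φ c * mnMonomial n Γ e 1 0 ^ j).support) : lamDeg e g = j := by
  obtain ⟨u, hu, v, hv, huv⟩ := exists_deg_eq_add_of_mem_support_mul (lamDeg e) hg
  rw [mnMonomial, single_pow, one_pow] at hv
  obtain rfl := support_single_subset hv
  rw [huv, deg_eq_zero_of_mem_degreeZeroSubfield (hΦ.mem_degreeZeroSubfield c) hu]
  simp

lemma lamDeg_mem_support_mnExpand (hΦ : IsExpansionHom n Γ e Φ) {p : (RatField n)[X]} {g : Γ}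
    (hg : g ∈ (mnExpand n Γ e Φ p).support) : 0 ≤ lamDeg e g ∧ lamDeg e g ≤ p.natDegree := by
  rw [mnExpand, eval₂_eq_sum_range, mem_support, HahnSeries.coeff_sum] at hg
  obtain ⟨j, hj, hj0⟩ := Finset.exists_ne_zero_of_sum_ne_zero hg
  rw [lamDeg_eq_of_mem_support_term hΦ _ j hj0]
  have := Finset.mem_range_succ_iff.mp hj
  omega

lemma ctFilter_mnExpand_natDegree_ne_zero (hΦ : IsExpansionHom n Γ e Φ) {p : (RatField n)[X]}
    (hp : p ≠ 0) :
    ctFilter (fun g => lamDeg e g = p.natDegree) (mnExpand n Γ e Φ p) ≠ 0 := by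
  rw [mnExpand, eval₂_eq_sum_range, ctFilter_sum, Finset.sum_eq_single p.natDegree]
  · rw [ctFilter_eq_self fun g hg => lamDeg_eq_of_mem_support_term hΦ _ _ hg]
    exact mul_ne_zero ((map_ne_zero Φ).mpr (leadingCoeff_ne_zero.mpr hp))
      (pow_ne_zero _ (single_ne_zero one_ne_zero))
  · intro j _ hj
    exact ctFilter_eq_zero fun g hg => by
      rw [lamDeg_eq_of_mem_support_term hΦ _ _ hg]
      exact_mod_cast hj
  · exact fun h => absurd (Finset.self_mem_range_succ _) h

lemma mnExpand_ne_zero (hΦ : IsExpansionHom n Γ e Φ) {p : (RatField n)[X]} (hp : p ≠ 0) :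
    mnExpand n Γ e Φ p ≠ 0 := fun h =>
  ctFilter_mnExpand_natDegree_ne_zero hΦ hp (by rw [h]; exact ctFilter_eq_zero (by simp))

lemma mnExpand_mul (p q : (RatField n)[X]) :
    mnExpand n Γ e Φ (p * q) = mnExpand n Γ e Φ p * mnExpand n Γ e Φ q :=
  eval₂_mul _ _

lemma inv_mnExpand_eq_of_eq_mul (hΦ : IsExpansionHom n Γ e Φ) {q d r : (RatField n)[X]}
    (hr : r ≠ 0) (h : q = d * r) :
    (mnExpand n Γ e Φ d)⁻¹ = mnExpand n Γ e Φ r * (mnExpand n Γ e Φ q)⁻¹ := by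
  rw [h, mnExpand_mul, mul_inv, mul_left_comm,
    mul_inv_cancel₀ (mnExpand_ne_zero hΦ hr), mul_one]

lemma IsPT.of_dvd (hΦ : IsExpansionHom n Γ e Φ) {q d : (RatField n)[X]} (hq : q ≠ 0)
    (hPT : IsPT n Γ e Φ q) (hd : d ∣ q) : IsPT n Γ e Φ d := by
  obtain ⟨r, rfl⟩ := hd
  intro g hg
  rw [inv_mnExpand_eq_of_eq_mul hΦ (right_ne_zero_of_mul hq) rfl] at hg
  obtain ⟨u, hu, v, hv, huv⟩ := exists_deg_eq_add_of_mem_support_mul (lamDeg e) hg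
  have hu₀ := (lamDeg_mem_support_mnExpand hΦ hu).1
  have hv₀ := hPT v hv
  simp only [lamDeg_apply] at huv hu₀
  omega

lemma IsNT.bddAbove_of_dvd (hΦ : IsExpansionHom n Γ e Φ) {q d : (RatField n)[X]} (hq : q ≠ 0)
    (hNT : IsNT n Γ e Φ q) (hd : d ∣ q) :
    BddAbove (lamDeg e '' (mnExpand n Γ e Φ d)⁻¹.support) := by
  obtain ⟨r, rfl⟩ := hd
  refine ⟨r.natDegree, ?_⟩
  rintro _ ⟨g, hg, rfl⟩
  rw [inv_mnExpand_eq_of_eq_mul hΦ (right_ne_zero_of_mul hq) rfl] at hg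
  obtain ⟨u, hu, v, hv, huv⟩ := exists_deg_eq_add_of_mem_support_mul (lamDeg e) hg
  have hu₀ := (lamDeg_mem_support_mnExpand hΦ hu).2
  have hv₀ := hNT v hv
  simp only [lamDeg_apply] at huv hu₀ ⊢
  omega

lemma natDegree_eq_zero_of_isPT_of_bddAbove (hΦ : IsExpansionHom n Γ e Φ)
    {d : (RatField n)[X]} (hd : d ≠ 0) (hPT : IsPT n Γ e Φ d)
    (hbdd : BddAbove (lamDeg e '' (mnExpand n Γ e Φ d)⁻¹.support)) : d.natDegree = 0 := by
  obtain ⟨g, hg, hdeg⟩ := exists_deg_eq_neg_of_mul_eq_one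
    (mul_inv_cancel₀ (mnExpand_ne_zero hΦ hd)) (fun g hg => (lamDeg_mem_support_mnExpand hΦ hg).2)
    (ctFilter_mnExpand_natDegree_ne_zero hΦ hd) hbdd
  have := hPT g hg
  rw [lamDeg_apply] at hdeg
  omega

end Expansion

/-- **Corollary 3.3 (c-relprime).**  Let `q₁(λ), q₂(λ) ∈ K[λ]` be nonzero, where
`K = ℂ(x₁, …, xₙ)`.  If, with respect to a compatible total ordering `⪯^ρ` on the group
of Laurent monomials in `λ, x₁, …, xₙ`, `1/q₁(λ)` is `PT^ρ` in `λ` and `1/q₂(λ)` is `NT^ρ`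
in `λ`, then `q₁(λ)` and `q₂(λ)` have no nontrivial common divisor in `K[λ]`, i.e. they
are relatively prime. -/
theorem coprime_of_pt_nt
    (n : ℕ) (Γ : Type) [AddCommGroup Γ] [LinearOrder Γ] [IsOrderedAddMonoid Γ]
    (e : Γ ≃+ ℤ × (Fin n → ℤ))
    (Φ : RatField n →+* HahnSeries Γ ℂ) (hΦ : IsExpansionHom n Γ e Φ)
    (q₁ q₂ : Polynomial (RatField n)) (hq₁ : q₁ ≠ 0) (hq₂ : q₂ ≠ 0)
    (hPT : IsPT n Γ e Φ q₁) (hNT : IsNT n Γ e Φ q₂) :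
    IsCoprime q₁ q₂ := by
  have hd : EuclideanDomain.gcd q₁ q₂ ≠ 0 := fun h => hq₁ (EuclideanDomain.gcd_eq_zero_iff.mp h).1
  have hdeg := natDegree_eq_zero_of_isPT_of_bddAbove hΦ hd
    (hPT.of_dvd hΦ hq₁ (EuclideanDomain.gcd_dvd_left _ _))
    (hNT.bddAbove_of_dvd hΦ hq₂ (EuclideanDomain.gcd_dvd_right _ _))
  exact EuclideanDomain.gcd_isUnit_iff.mp
    (Polynomial.isUnit_iff_degree_eq_zero.mpr ((Polynomial.degree_eq_iff_natDegree_eq hd).mpr hdeg))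
end
end

section
/- Let A be an r×n integer matrix (n ≥ 2) with columns C₁,…,Cₙ, and define A₁ = (C₁, C₁+C₂, C₃,…,Cₙ), A₂ = (C₁+C₂, C₂, C₃,…,Cₙ), A₃ = (C₁+C₂, C₃,…,Cₙ). Let Ē = {α ∈ ℙⁿ : Aα = 0} and Ē_i the set of positive integer solutions of A_iα = 0 (for i = 1,2 in ℙⁿ, for i = 3 in ℙ^{n−1}). Suppose Ē is nonempty. If any two of Ē₁, Ē₂, Ē₃ are nonempty, then all three are nonempty. -/
private lemma peel2 (m : ℕ) (f : Fin (m + 2) → ℤ) :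
    ∑ j, f j = f 0 + f 1 + ∑ j : Fin m, f j.succ.succ := by
  rw [Fin.sum_univ_succ, Fin.sum_univ_succ, ← add_assoc]
  norm_num [Fin.succ_zero_eq_one]

private lemma ssne0 (m : ℕ) (j : Fin m) : (j.succ.succ : Fin (m + 2)) ≠ 0 :=
  Fin.succ_ne_zero _

private lemma ssne1 (m : ℕ) (j : Fin m) : (j.succ.succ : Fin (m + 2)) ≠ 1 := by
  intro h
  have := congrArg Fin.val h
  simp [Fin.val_succ] at this

private lemma sol_iff {r : ℕ} {m : Type*} [Fintype m] (A : Matrix (Fin r) m ℤ)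
    (α : m → ℤ) : A.mulVec α = 0 ↔ ∀ i, ∑ j, A i j * α j = 0 := by
  constructor
  · intro h i
    have := congrFun h i
    simpa [Matrix.mulVec, dotProduct] using this
  · intro h
    funext i
    simpa [Matrix.mulVec, dotProduct] using h i

section Helpers
variable {r n : ℕ} (A : Matrix (Fin r) (Fin (n + 2)) ℤ)

private lemma toE1 (α : Fin (n + 2) → ℤ) (hpos : ∀ i, 0 < α i)
    (hsol : A.mulVec α = 0) (hlt : α 1 < α 0) :
    ∃ β : Fin (n + 2) → ℤ, (∀ i, 0 < β i) ∧
      (Matrix.of fun i j => if j = 1 then A i 0 + A i 1 else A i j).mulVec β = 0 := by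
  refine ⟨fun j => if j = 0 then α 0 - α 1 else α j, ?_, ?_⟩
  · intro i
    by_cases h : i = 0
    · simp [h]; linarith
    · simp [h]; exact hpos i
  · rw [sol_iff]
    intro i
    have h0 := (sol_iff A α).1 hsol i
    rw [peel2] at h0 ⊢
    simp [ssne0, ssne1] at h0 ⊢
    linarith

private lemma fromE1 (β : Fin (n + 2) → ℤ) (hpos : ∀ i, 0 < β i)
    (hsol : (Matrix.of fun i j => if j = 1 then A i 0 + A i 1 else A i j).mulVec β = 0) :
    ∃ α : Fin (n + 2) → ℤ, (∀ i, 0 < α i) ∧ A.mulVec α = 0 ∧ α 1 < α 0 := by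
  refine ⟨fun j => if j = 0 then β 0 + β 1 else β j, ?_, ?_, ?_⟩
  · intro i
    by_cases h : i = 0
    · simp [h]; linarith [hpos 0, hpos 1]
    · simp [h]; exact hpos i
  · rw [sol_iff]
    intro i
    have h0 := (sol_iff _ β).1 hsol i
    rw [peel2] at h0 ⊢
    simp [ssne0, ssne1] at h0 ⊢
    linarith
  · simp; linarith [hpos 0, hpos 1]

private lemma toE2 (α : Fin (n + 2) → ℤ) (hpos : ∀ i, 0 < α i)
    (hsol : A.mulVec α = 0) (hlt : α 0 < α 1) :
    ∃ β : Fin (n + 2) → ℤ, (∀ i, 0 < β i) ∧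
      (Matrix.of fun i j => if j = 0 then A i 0 + A i 1 else A i j).mulVec β = 0 := by
  refine ⟨fun j => if j = 1 then α 1 - α 0 else α j, ?_, ?_⟩
  · intro i
    by_cases h : i = 1
    · simp [h]; linarith
    · simp [h]; exact hpos i
  · rw [sol_iff]
    intro i
    have h0 := (sol_iff A α).1 hsol i
    rw [peel2] at h0 ⊢
    simp [ssne0, ssne1] at h0 ⊢
    linarith

private lemma fromE2 (β : Fin (n + 2) → ℤ) (hpos : ∀ i, 0 < β i)
    (hsol : (Matrix.of fun i j => if j = 0 then A i 0 + A i 1 else A i j).mulVec β = 0) :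
    ∃ α : Fin (n + 2) → ℤ, (∀ i, 0 < α i) ∧ A.mulVec α = 0 ∧ α 0 < α 1 := by
  refine ⟨fun j => if j = 1 then β 0 + β 1 else β j, ?_, ?_, ?_⟩
  · intro i
    by_cases h : i = 1
    · simp [h]; linarith [hpos 0, hpos 1]
    · simp [h]; exact hpos i
  · rw [sol_iff]
    intro i
    have h0 := (sol_iff _ β).1 hsol i
    rw [peel2] at h0 ⊢
    simp [ssne0, ssne1] at h0 ⊢
    linarith
  · simp; linarith [hpos 0, hpos 1]

private lemma toE3 (α : Fin (n + 2) → ℤ) (hpos : ∀ i, 0 < α i)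
    (hsol : A.mulVec α = 0) (heq : α 0 = α 1) :
    ∃ β : Fin (n + 1) → ℤ, (∀ i, 0 < β i) ∧
      (Matrix.of fun i (j : Fin (n + 1)) =>
        if j = 0 then A i 0 + A i 1 else A i j.succ).mulVec β = 0 := by
  refine ⟨fun j => if j = 0 then α 0 else α j.succ, ?_, ?_⟩
  · intro i
    by_cases h : i = 0
    · simp [h]; exact hpos 0
    · simp [h]; exact hpos i.succ
  · rw [sol_iff]
    intro i
    have h0 := (sol_iff A α).1 hsol i
    rw [peel2] at h0
    rw [Fin.sum_univ_succ]
    simp [Fin.succ_ne_zero] at h0 ⊢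
    linear_combination h0 + A i 1 * heq

private lemma fromE3 (β : Fin (n + 1) → ℤ) (hpos : ∀ i, 0 < β i)
    (hsol : (Matrix.of fun i (j : Fin (n + 1)) =>
        if j = 0 then A i 0 + A i 1 else A i j.succ).mulVec β = 0) :
    ∃ α : Fin (n + 2) → ℤ, (∀ i, 0 < α i) ∧ A.mulVec α = 0 ∧ α 0 = α 1 := by
  have e1 : (Fin.cons (β 0) β : Fin (n+2) → ℤ) 1 = β 0 := by
    rw [← Fin.succ_zero_eq_one, Fin.cons_succ]
  refine ⟨Fin.cons (β 0) β, ?_, ?_, ?_⟩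
  · intro i
    refine Fin.cases ?_ ?_ i
    · simpa using hpos 0
    · intro j; simpa using hpos j
  · rw [sol_iff]
    intro i
    have h0 := (sol_iff _ β).1 hsol i
    rw [Fin.sum_univ_succ] at h0
    rw [peel2]
    simp [Fin.succ_ne_zero] at h0 ⊢
    linear_combination h0
  · rw [e1, Fin.cons_zero]

private lemma comb (x y : Fin (n + 2) → ℤ) (hx : A.mulVec x = 0) (hy : A.mulVec y = 0)
    (a b : ℤ) : A.mulVec (a • x + b • y) = 0 := by
  rw [Matrix.mulVec_add, Matrix.mulVec_smul, Matrix.mulVec_smul, hx, hy]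
  simp

end Helpers

/-- **Lemma 6.1 (l-3-empty-23).** Let `A` be an `r × n` integer matrix (`n ≥ 2`, here `n + 2`
columns `C₀, C₁, …`), and let `A₁, A₂, A₃` be obtained from `A` by replacing the second column
with `C₀ + C₁`, replacing the first column with `C₀ + C₁`, and merging the first two columns
into the single column `C₀ + C₁`, respectively.  Let `Ē` (resp. `Ē₁, Ē₂, Ē₃`) be the set of
strictly positive integer solutions of `Aα = 0` (resp. of `A₁α = 0`, `A₂α = 0`, `A₃α = 0`).
If `Ē` is nonempty, then any two of `Ē₁, Ē₂, Ē₃` being nonempty implies all three are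
nonempty. -/
theorem positive_solution_sets_two_nonempty_implies_all
    (r n : ℕ) (A : Matrix (Fin r) (Fin (n + 2)) ℤ)
    (hE : ∃ α : Fin (n + 2) → ℤ, (∀ i, 0 < α i) ∧ A.mulVec α = 0)
    (E1 E2 : Set (Fin (n + 2) → ℤ)) (E3 : Set (Fin (n + 1) → ℤ))
    (hE1 : E1 = {α | (∀ i, 0 < α i) ∧
      (Matrix.of fun i j => if j = 1 then A i 0 + A i 1 else A i j).mulVec α = 0})
    (hE2 : E2 = {α | (∀ i, 0 < α i) ∧
      (Matrix.of fun i j => if j = 0 then A i 0 + A i 1 else A i j).mulVec α = 0})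
    (hE3 : E3 = {α | (∀ i, 0 < α i) ∧
      (Matrix.of fun i (j : Fin (n + 1)) =>
        if j = 0 then A i 0 + A i 1 else A i j.succ).mulVec α = 0})
    (htwo : (E1.Nonempty ∧ E2.Nonempty) ∨ (E1.Nonempty ∧ E3.Nonempty) ∨
      (E2.Nonempty ∧ E3.Nonempty)) :
    E1.Nonempty ∧ E2.Nonempty ∧ E3.Nonempty := by
  subst hE1 hE2 hE3
  have key : (∃ x, (∀ i, 0 < x i) ∧ A.mulVec x = 0 ∧ x 1 < x 0) ∧
      (∃ y, (∀ i, 0 < y i) ∧ A.mulVec y = 0 ∧ y 0 < y 1) ∧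
      (∃ z, (∀ i, 0 < z i) ∧ A.mulVec z = 0 ∧ z 0 = z 1) := by
    have mkEQ : ∀ x y : Fin (n+2) → ℤ, (∀ i, 0 < x i) → A.mulVec x = 0 → x 1 < x 0 →
        (∀ i, 0 < y i) → A.mulVec y = 0 → y 0 < y 1 →
        ∃ z, (∀ i, 0 < z i) ∧ A.mulVec z = 0 ∧ z 0 = z 1 := by
      intro x y hxp hxs hx hyp hys hy
      refine ⟨(y 1 - y 0) • x + (x 0 - x 1) • y, ?_, comb A x y hxs hys _ _, ?_⟩
      · intro i
        have h1 := hxp i; have h2 := hyp i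
        simp only [Pi.add_apply, Pi.smul_apply, smul_eq_mul]
        nlinarith
      · simp only [Pi.add_apply, Pi.smul_apply, smul_eq_mul]
        ring
    have mkFromEQ : ∀ x z : Fin (n+2) → ℤ, (∀ i, 0 < x i) → A.mulVec x = 0 →
        (∀ i, 0 < z i) → A.mulVec z = 0 → z 0 = z 1 →
        ∃ y, (∀ i, 0 < y i) ∧ A.mulVec y = 0 ∧ y 1 - y 0 = x 0 - x 1 := by
      intro x z hxp hxs hzp hzs hz
      set N : ℤ := 1 + ∑ j, |x j| with hN
      refine ⟨N • z + (-1) • x, ?_, comb A z x hzs hxs _ _, ?_⟩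
      · intro i
        have h1 : |x i| ≤ ∑ j, |x j| :=
          Finset.single_le_sum (fun j _ => abs_nonneg (x j)) (Finset.mem_univ i)
        have h2 : x i ≤ |x i| := le_abs_self (x i)
        have h3 : 1 ≤ z i := hzp i
        have h4 : 0 ≤ N := by positivity
        have h5 : N * 1 ≤ N * z i := mul_le_mul_of_nonneg_left h3 h4
        rw [mul_one] at h5
        simp only [Pi.add_apply, Pi.smul_apply, smul_eq_mul]
        linarith
      · simp only [Pi.add_apply, Pi.smul_apply, smul_eq_mul]
        linear_combination (-N) * hz
    rcases htwo with ⟨⟨u, hu⟩, ⟨v, hv⟩⟩ | ⟨⟨u, hu⟩, ⟨w, hw⟩⟩ | ⟨⟨v, hv⟩, ⟨w, hw⟩⟩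
    · obtain ⟨x, hxp, hxs, hx⟩ := fromE1 A u hu.1 hu.2
      obtain ⟨y, hyp, hys, hy⟩ := fromE2 A v hv.1 hv.2
      exact ⟨⟨x, hxp, hxs, hx⟩, ⟨y, hyp, hys, hy⟩, mkEQ x y hxp hxs hx hyp hys hy⟩
    · obtain ⟨x, hxp, hxs, hx⟩ := fromE1 A u hu.1 hu.2
      obtain ⟨z, hzp, hzs, hz⟩ := fromE3 A w hw.1 hw.2
      obtain ⟨y, hyp, hys, hy⟩ := mkFromEQ x z hxp hxs hzp hzs hz
      exact ⟨⟨x, hxp, hxs, hx⟩, ⟨y, hyp, hys, by linarith⟩, ⟨z, hzp, hzs, hz⟩⟩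
    · obtain ⟨y, hyp, hys, hy⟩ := fromE2 A v hv.1 hv.2
      obtain ⟨z, hzp, hzs, hz⟩ := fromE3 A w hw.1 hw.2
      obtain ⟨x, hxp, hxs, hx⟩ := mkFromEQ y z hyp hys hzp hzs hz
      exact ⟨⟨x, hxp, hxs, by linarith⟩, ⟨y, hyp, hys, hy⟩, ⟨z, hzp, hzs, hz⟩⟩
  obtain ⟨⟨x, hxp, hxs, hx⟩, ⟨y, hyp, hys, hy⟩, ⟨z, hzp, hzs, hz⟩⟩ := key
  obtain ⟨b1, h1⟩ := toE1 A x hxp hxs hx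
  obtain ⟨b2, h2⟩ := toE2 A y hyp hys hy
  obtain ⟨b3, h3⟩ := toE3 A z hzp hzs hz
  exact ⟨⟨b1, h1⟩, ⟨b2, h2⟩, ⟨b3, h3⟩⟩
end

section
/- Let A be an r×n integer matrix (n ≥ 2) with columns C₁,…,Cₙ, and define A₁ = (C₁, C₁+C₂, C₃,…,Cₙ), A₂ = (C₁+C₂, C₂, C₃,…,Cₙ), A₃ = (C₁+C₂, C₃,…,Cₙ). Let Ē_i be the set of positive integer solutions of A_iα = 0. If Ē₁, Ē₂ and Ē₃ are all nonempty, then rank(A₃) = rank(A). -/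
lemma finrank_submodule_eq_of_torsion {R : Type*} [CommRing R] [IsDomain R]
    {V : Type*} [AddCommGroup V] [Module R V] (N M : Submodule R V) (h : N ≤ M)
    (htor : ∀ x ∈ M, ∃ k : R, k ≠ 0 ∧ k • x ∈ N) :
    Module.finrank R N = Module.finrank R M := by
  have key : Module.rank R N = Module.rank R M := by
    have e : (N.comap M.subtype) ≃ₗ[R] N := Submodule.comapSubtypeEquivOfLe h
    have hq : Module.rank R (M ⧸ (N.comap M.subtype)) = 0 := by
      rw [rank_eq_zero_iff_isTorsion]
      intro x
      obtain ⟨m, rfl⟩ := Submodule.Quotient.mk_surjective _ x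
      obtain ⟨k, hk, hkm⟩ := htor m m.2
      refine ⟨⟨k, mem_nonZeroDivisors_of_ne_zero hk⟩, ?_⟩
      rw [Submonoid.smul_def, ← Submodule.Quotient.mk_smul, Submodule.Quotient.mk_eq_zero]
      exact hkm
    have h1 := rank_quotient_add_rank_of_isDomain (R := R) (N.comap M.subtype)
    rw [hq, zero_add, e.rank_eq] at h1
    exact h1
  rw [Module.finrank, Module.finrank, key]

/-- **Lemma 6.2 (l-3-rankall).** Let `A` be an `r × n` integer matrix (`n ≥ 2`, here `n + 2`
columns `C₀, C₁, …`), and let `A₁ = (C₀, C₀+C₁, C₂, …)`, `A₂ = (C₀+C₁, C₁, C₂, …)`,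
`A₃ = (C₀+C₁, C₂, …)`.  If the sets `Ē₁, Ē₂, Ē₃` of strictly positive integer solutions of
`A₁α = 0`, `A₂α = 0`, `A₃α = 0` are all nonempty, then `rank A₃ = rank A`. -/
theorem rank_merge_eq_of_positive_solutions
    (r n : ℕ) (A : Matrix (Fin r) (Fin (n + 2)) ℤ)
    (A₁ A₂ : Matrix (Fin r) (Fin (n + 2)) ℤ) (A₃ : Matrix (Fin r) (Fin (n + 1)) ℤ)
    (hA₁ : A₁ = Matrix.of fun i j => if j = 1 then A i 0 + A i 1 else A i j)
    (hA₂ : A₂ = Matrix.of fun i j => if j = 0 then A i 0 + A i 1 else A i j)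
    (hA₃ : A₃ = Matrix.of fun i (j : Fin (n + 1)) =>
      if j = 0 then A i 0 + A i 1 else A i j.succ)
    (h1 : ∃ α : Fin (n + 2) → ℤ, (∀ i, 0 < α i) ∧ A₁.mulVec α = 0)
    (h2 : ∃ α : Fin (n + 2) → ℤ, (∀ i, 0 < α i) ∧ A₂.mulVec α = 0)
    (h3 : ∃ α : Fin (n + 1) → ℤ, (∀ i, 0 < α i) ∧ A₃.mulVec α = 0) :
    A₃.rank = A.rank := by
  clear h3
  obtain ⟨α, hαpos, hα⟩ := h1
  obtain ⟨β, hβpos, hβ⟩ := h2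
  subst hA₁ hA₂ hA₃
  -- `u` realizes `α 0 • C₀` as an `A₃`-combination, `v` realizes `β 1 • C₁`.
  set u : Fin (n + 1) → ℤ := Fin.cons (-α 1) (fun j : Fin n => -α j.succ.succ) with hu_def
  set v : Fin (n + 1) → ℤ := Fin.cons (-β 0) (fun j : Fin n => -β j.succ.succ) with hv_def
  set A₃ : Matrix (Fin r) (Fin (n + 1)) ℤ := Matrix.of fun i (j : Fin (n + 1)) =>
      if j = 0 then A i 0 + A i 1 else A i j.succ with hA3
  have hu : A₃.mulVec u = fun i => α 0 * A i 0 := by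
    funext i
    have h := congrFun hα i
    simp only [hA3, Matrix.mulVec, dotProduct, Matrix.of_apply, Fin.sum_univ_succ,
      Pi.zero_apply, Fin.cons_zero, Fin.cons_succ, hu_def, mul_neg, Finset.sum_neg_distrib,
      Fin.ext_iff, Fin.val_zero, Fin.val_one, Fin.val_succ] at h ⊢
    norm_num at h ⊢
    linarith [h]
  have hv : A₃.mulVec v = fun i => β 1 * A i 1 := by
    funext i
    have h := congrFun hβ i
    simp only [hA3, Matrix.mulVec, dotProduct, Matrix.of_apply, Fin.sum_univ_succ,
      Pi.zero_apply, Fin.cons_zero, Fin.cons_succ, hv_def, mul_neg, Finset.sum_neg_distrib,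
      Fin.ext_iff, Fin.val_zero, Fin.val_one, Fin.val_succ] at h ⊢
    norm_num at h ⊢
    linarith [h]
  have hw : ∀ w' : Fin n → ℤ, A₃.mulVec (Fin.cons 0 w') =
      fun i => ∑ j : Fin n, A i j.succ.succ * w' j := by
    intro w'
    funext i
    simp only [hA3, Matrix.mulVec, dotProduct, Matrix.of_apply, Fin.sum_univ_succ,
      Fin.cons_zero, Fin.cons_succ, Fin.ext_iff, Fin.val_zero, Fin.val_one, Fin.val_succ]
    norm_num
  set k : ℤ := α 0 * β 1 with hk_def
  have hk : k ≠ 0 := by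
    have := hαpos 0; have := hβpos 1; positivity
  have hAsum : ∀ y : Fin (n + 2) → ℤ, A.mulVec y =
      fun i => A i 0 * y 0 + A i 1 * y 1 + ∑ j : Fin n, A i j.succ.succ * y j.succ.succ := by
    intro y; funext i
    simp only [Matrix.mulVec, dotProduct, Fin.sum_univ_succ]
    have : (Fin.succ 0 : Fin (n + 2)) = 1 := rfl
    rw [this]; ring
  have hz : ∀ y : Fin (n + 2) → ℤ,
      A₃.mulVec ((β 1 * y 0) • u + (α 0 * y 1) • v +
        Fin.cons 0 (fun j : Fin n => k * y j.succ.succ)) = k • A.mulVec y := by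
    intro y
    rw [Matrix.mulVec_add, Matrix.mulVec_add, Matrix.mulVec_smul, Matrix.mulVec_smul,
      hu, hv, hw, hAsum]
    funext i
    simp only [Pi.add_apply, Pi.smul_apply, smul_eq_mul]
    have : ∑ j : Fin n, A i j.succ.succ * (k * y j.succ.succ)
        = k * ∑ j : Fin n, A i j.succ.succ * y j.succ.succ := by
      rw [Finset.mul_sum]; exact Finset.sum_congr rfl fun j _ => by ring
    rw [this, hk_def]; ring
  have hle : ∀ x : Fin (n + 1) → ℤ, A₃.mulVec x =
      A.mulVec (Fin.cons (x 0) (Fin.cons (x 0) (fun j => x j.succ))) := by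
    intro x
    rw [hAsum]
    funext i
    simp only [hA3, Matrix.mulVec, dotProduct, Matrix.of_apply, Fin.sum_univ_succ,
      Fin.cons_zero, Fin.cons_succ, Fin.ext_iff, Fin.val_zero, Fin.val_one, Fin.val_succ]
    norm_num
    ring
  rw [Matrix.rank, Matrix.rank]
  apply finrank_submodule_eq_of_torsion
  · rintro x ⟨w, rfl⟩
    exact ⟨Fin.cons (w 0) (Fin.cons (w 0) (fun j => w j.succ)),
      by rw [Matrix.mulVecLin_apply, Matrix.mulVecLin_apply, ← hle]⟩
  · rintro x ⟨y, rfl⟩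
    refine ⟨k, hk, ⟨(β 1 * y 0) • u + (α 0 * y 1) • v +
      Fin.cons 0 (fun j : Fin n => k * y j.succ.succ), ?_⟩⟩
    rw [Matrix.mulVecLin_apply, Matrix.mulVecLin_apply, hz]
end

section
/- Let A be an r×n integer matrix, E = {α ∈ ℕⁿ : Aα = 0} and Ē = {α ∈ ℙⁿ : Aα = 0}. If Ē is nonempty, then Ē contains n − rank(A) linearly independent vectors; consequently the ℚ-linear spans of E and of Ē both equal the full rational solution space {α ∈ ℚⁿ : Aα = 0}, so dim E = dim Ē = n − rank(A). -/
/-!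
If `α` is a positive solution, every rational solution `v` equals `(v + tα) - tα`, a difference
of positive rational solutions once `t` is large; clearing denominators, a positive rational
solution is a positive rational multiple of a positive integer solution. So the positive, and a
fortiori the nonnegative, integer solutions span the rational kernel of `A`, whose dimension is
`n - rank A` by rank–nullity, and a basis of it can be chosen among the positive solutions.
-/

open Filter Submodule

section PositiveSpan

variable {K ι : Type*} [Field K] [LinearOrder K] [IsStrictOrderedRing K] [Finite ι]

theorem exists_pos_add_mul_pos {α : ι → K} (hα : ∀ i, 0 < α i) (v : ι → K) :
    ∃ t : K, 0 < t ∧ ∀ i, 0 < v i + t * α i := by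
  have h : ∀ i, ∀ᶠ t in atTop, 0 < v i + t * α i := fun i =>
    (tendsto_atTop_add_const_left _ _ (tendsto_id.atTop_mul_const (hα i))).eventually_gt_atTop 0
  exact ((eventually_gt_atTop 0).and (eventually_all.2 h)).exists

theorem Submodule.span_setOf_pos_eq {p : Submodule K (ι → K)} {α : ι → K} (hαp : α ∈ p)
    (hα : ∀ i, 0 < α i) : span K {v | v ∈ p ∧ ∀ i, 0 < v i} = p := by
  refine le_antisymm (span_le.2 fun v hv => hv.1) fun v hv => ?_
  obtain ⟨t, ht, htv⟩ := exists_pos_add_mul_pos hα v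
  have hshift : v + t • α ∈ span K {v | v ∈ p ∧ ∀ i, 0 < v i} :=
    subset_span ⟨p.add_mem hv (p.smul_mem t hαp), htv⟩
  have hscaled : t • α ∈ span K {v | v ∈ p ∧ ∀ i, 0 < v i} :=
    subset_span ⟨p.smul_mem t hαp, fun i => mul_pos ht (hα i)⟩
  simpa using sub_mem hshift hscaled

end PositiveSpan

theorem Rat.exists_nat_mul_eq_intCast {ι : Type*} [Fintype ι] (v : ι → ℚ) :
    ∃ m : ℕ, 0 < m ∧ ∃ w : ι → ℤ, ∀ i, (w i : ℚ) = m * v i := by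
  classical
  refine ⟨∏ i, (v i).den, Finset.prod_pos fun i _ => (v i).pos,
    fun i => (∏ j ∈ Finset.univ.erase i, (v j).den : ℕ) * (v i).num, fun i => ?_⟩
  rw [← Finset.prod_erase_mul _ _ (Finset.mem_univ i)]
  push_cast
  rw [mul_assoc, Rat.den_mul_eq_num]

namespace Matrix

variable {m ι : Type*} [Fintype ι]

theorem map_mulVec_comp_eq_zero_iff {R S : Type*} [NonAssocSemiring R] [NonAssocSemiring S]
    {f : R →+* S} (hf : Function.Injective f) (A : Matrix m ι R) (v : ι → R) :
    A.map f *ᵥ (f ∘ v) = 0 ↔ A *ᵥ v = 0 := by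
  simp only [funext_iff, ← RingHom.map_mulVec, Pi.zero_apply, map_eq_zero_iff f hf]

theorem finrank_ker_mulVecLin {K : Type*} [Field K] [Fintype m] (A : Matrix m ι K) :
    Module.finrank K (LinearMap.ker A.mulVecLin) = Fintype.card ι - A.rank := by
  have := LinearMap.finrank_range_add_finrank_ker A.mulVecLin
  rw [Module.finrank_fintype_fun_eq_card] at this
  rw [rank]
  omega

/-- With `P = (0 ≤ ·)` and `P = (0 < ·)` these are the sets `E` and `Ē`, viewed in `ℚⁿ`. -/
def intSolutionsWith (A : Matrix m ι ℤ) (P : ℤ → Prop) : Set (ι → ℚ) :=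
  {v | ∃ β : ι → ℤ, (∀ i, P (β i)) ∧ A *ᵥ β = 0 ∧ v = fun i => (β i : ℚ)}

variable (A : Matrix m ι ℤ)

theorem intCast_mem_ker_iff (β : ι → ℤ) :
    (fun i => (β i : ℚ)) ∈ LinearMap.ker (A.map ((↑) : ℤ → ℚ)).mulVecLin ↔ A *ᵥ β = 0 :=
  map_mulVec_comp_eq_zero_iff (f := Int.castRingHom ℚ) Int.cast_injective A β

theorem intSolutionsWith_subset_ker (P : ℤ → Prop) :
    A.intSolutionsWith P ⊆ LinearMap.ker (A.map ((↑) : ℤ → ℚ)).mulVecLin := by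
  rintro _ ⟨β, -, hβ, rfl⟩
  exact (A.intCast_mem_ker_iff β).2 hβ

theorem intSolutionsWith_mono {P Q : ℤ → Prop} (hPQ : ∀ x, P x → Q x) :
    A.intSolutionsWith P ⊆ A.intSolutionsWith Q := by
  rintro _ ⟨β, hβP, hβ, rfl⟩
  exact ⟨β, fun i => hPQ _ (hβP i), hβ, rfl⟩

theorem mem_span_intSolutionsWith_pos {v : ι → ℚ}
    (hv : v ∈ LinearMap.ker (A.map ((↑) : ℤ → ℚ)).mulVecLin) (hpos : ∀ i, 0 < v i) :
    v ∈ span ℚ (A.intSolutionsWith (0 < ·)) := by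
  obtain ⟨c, hc, w, hw⟩ := Rat.exists_nat_mul_eq_intCast v
  have hwv : (fun i => (w i : ℚ)) = (c : ℚ) • v := funext fun i => hw i
  have hwA : A *ᵥ w = 0 := by
    rw [← intCast_mem_ker_iff, hwv]
    exact smul_mem _ _ hv
  have hwpos : ∀ i, 0 < w i := fun i => by
    have : (0 : ℚ) < w i := hw i ▸ mul_pos (Nat.cast_pos.2 hc) (hpos i)
    exact_mod_cast this
  have hw_mem : (fun i => (w i : ℚ)) ∈ span ℚ (A.intSolutionsWith (0 < ·)) :=
    subset_span ⟨w, hwpos, hwA, rfl⟩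
  simpa [hwv, Nat.cast_ne_zero.2 hc.ne'] using smul_mem _ (c : ℚ)⁻¹ hw_mem

theorem span_intSolutionsWith_pos_eq_ker {α : ι → ℤ} (hα : ∀ i, 0 < α i) (hαA : A *ᵥ α = 0) :
    span ℚ (A.intSolutionsWith (0 < ·)) = LinearMap.ker (A.map ((↑) : ℤ → ℚ)).mulVecLin := by
  refine le_antisymm (span_le.2 (A.intSolutionsWith_subset_ker _)) ?_
  rw [← span_setOf_pos_eq ((A.intCast_mem_ker_iff α).2 hαA) fun i => Int.cast_pos.2 (hα i)]
  exact span_le.2 fun v hv => A.mem_span_intSolutionsWith_pos hv.1 hv.2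

end Matrix

/-- **Dimension fact of Section 6.**  Let `A` be an `r × n` integer matrix,
`E = {α ∈ ℕⁿ : Aα = 0}` and `Ē = {α ∈ ℙⁿ : Aα = 0}`.  If `Ē ≠ ∅`, then `Ē` contains
`n − rank A` linearly independent vectors; consequently the `ℚ`-linear spans of `E` and of
`Ē` both equal the full rational solution space `{α ∈ ℚⁿ : Aα = 0}`, whose dimension is
`n − rank A`; hence `dim E = dim Ē = n − rank A`. -/
theorem span_of_positive_solutions
    (r n : ℕ) (A : Matrix (Fin r) (Fin n) ℤ)
    (h : ∃ α : Fin n → ℤ, (∀ i, 0 < α i) ∧ A.mulVec α = 0) :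
    (∃ f : Fin (n - (A.map ((↑) : ℤ → ℚ)).rank) → (Fin n → ℚ),
      LinearIndependent ℚ f ∧
      ∀ j, ∃ β : Fin n → ℤ, (∀ i, 0 < β i) ∧ A.mulVec β = 0 ∧ f j = fun i => (β i : ℚ)) ∧
    Submodule.span ℚ
        {v : Fin n → ℚ | ∃ β : Fin n → ℤ, (∀ i, 0 ≤ β i) ∧ A.mulVec β = 0 ∧
          v = fun i => (β i : ℚ)} =
      LinearMap.ker (A.map ((↑) : ℤ → ℚ)).mulVecLin ∧
    Submodule.span ℚ
        {v : Fin n → ℚ | ∃ β : Fin n → ℤ, (∀ i, 0 < β i) ∧ A.mulVec β = 0 ∧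
          v = fun i => (β i : ℚ)} =
      LinearMap.ker (A.map ((↑) : ℤ → ℚ)).mulVecLin ∧
    Module.finrank ℚ (LinearMap.ker (A.map ((↑) : ℤ → ℚ)).mulVecLin) =
      n - (A.map ((↑) : ℤ → ℚ)).rank := by
  obtain ⟨α, hα, hαA⟩ := h
  have hpos : span ℚ (A.intSolutionsWith (0 < ·)) =
      LinearMap.ker (A.map ((↑) : ℤ → ℚ)).mulVecLin :=
    A.span_intSolutionsWith_pos_eq_ker hα hαA
  have hnonneg : span ℚ (A.intSolutionsWith (0 ≤ ·)) =
      LinearMap.ker (A.map ((↑) : ℤ → ℚ)).mulVecLin :=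
    le_antisymm (span_le.2 (A.intSolutionsWith_subset_ker _))
      (hpos ▸ span_mono (A.intSolutionsWith_mono fun _ => le_of_lt))
  have hdim := (A.map ((↑) : ℤ → ℚ)).finrank_ker_mulVecLin
  rw [Fintype.card_fin] at hdim
  have hbasis := exists_fun_fin_finrank_span_eq ℚ (A.intSolutionsWith (0 < ·))
  rw [hpos, hdim] at hbasis
  obtain ⟨f, hfA, -, hf⟩ := hbasis
  exact ⟨⟨f, hf, hfA⟩, hnonneg, hpos, hdim⟩
end

section
/- Let A be an r×n integer matrix (n ≥ 2) with columns C₁,…,Cₙ, and define A₁ = (C₁, C₁+C₂, C₃,…,Cₙ), A₂ = (C₁+C₂, C₂, C₃,…,Cₙ), A₃ = (C₁+C₂, C₃,…,Cₙ). Let E(x₁,…,xₙ) = Σ_{α∈ℕⁿ, Aα=0} x^α and let E₁, E₂ (in n variables) and E₃ (in n−1 variables) be the analogous generating functions over nonnegative integer solutions of A₁, A₂, A₃ respectively. Then, as formal power series: E(x₁,x₂,x₃,…,xₙ) = E₁(x₁, x₁x₂, x₃,…,xₙ) + E₂(x₁x₂, x₂, x₃,…,xₙ) − E₃(x₁x₂,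 x₃,…,xₙ). -/
/-!
Compare coefficients of `x^α`. Each substitution undoes a column operation on the exponent:
`A₁ = A · T₀₁` and `A₂ = A · T₁₀` for the unit transvections `T`, and `T₀₁ (α₀ - α₁, α₁, α₂, …) = α`
when `α₁ ≤ α₀`; similarly `A₃ (α₀, α₂, …) = A α` when `α₀ = α₁`. So on each of the regions
`α₀ ≥ α₁`, `α₀ ≤ α₁`, `α₀ = α₁` the substituted series has the coefficient of `E`, and the identity
is the inclusion–exclusion `[α₀ ≥ α₁] + [α₀ ≤ α₁] - [α₀ = α₁] = 1`.
-/

open Matrix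

theorem ite_le_add_ite_ge_sub_ite_eq {α G : Type*} [LinearOrder α] [AddGroup G]
    {a b : α} {x y z w : G} (hy : b ≤ a → y = x) (hz : a ≤ b → z = x) (hw : a = b → w = x) :
    ((if b ≤ a then y else 0) + (if a ≤ b then z else 0) - if a = b then w else 0) = x := by
  rcases lt_trichotomy a b with h | rfl | h
  · rw [if_neg h.not_ge, if_pos h.le, if_neg h.ne, hz h.le, zero_add, sub_zero]
  · rw [if_pos le_rfl, if_pos le_rfl, if_pos rfl, hy le_rfl, hz le_rfl, hw rfl,
      add_sub_cancel_right]
  · rw [if_pos h.le, if_neg h.not_ge, if_neg h.ne', hy h.le, add_zero, sub_zero]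

namespace Matrix

section Transvection

variable {m n R : Type*} [Fintype n] [DecidableEq n] [CommRing R]

theorem mul_transvection_one_apply (A : Matrix m n R) (i j : n) (r : m) (k : n) :
    (A * transvection i j (1 : R)) r k = if k = j then A r i + A r j else A r k := by
  split_ifs with hk
  · subst hk
    rw [mul_transvection_apply_same, one_mul, add_comm]
  · exact mul_transvection_apply_of_ne i j r k hk 1 A

theorem transvection_mulVec (i j : n) (c : R) (v : n → R) :
    transvection i j c *ᵥ v = Function.update v i (v i + c * v j) := by
  ext k
  rcases eq_or_ne k i with rfl | hk
  · simp [transvection, add_mulVec, single_mulVec]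
  · simp [transvection, add_mulVec, single_mulVec, hk]

theorem transvection_mulVec_natCast_sub {i j : n} (hij : i ≠ j) {d : n → ℕ} (h : d j ≤ d i) :
    transvection i j (1 : ℤ) *ᵥ (fun k => ((if k = i then d i - d j else d k : ℕ) : ℤ)) =
      fun k => (d k : ℤ) := by
  ext k
  rw [transvection_mulVec]
  rcases eq_or_ne k i with rfl | hk
  · simp [hij.symm, h]
  · simp [hk]

end Transvection

section MergeFirstCols

variable {m R : Type*} {n : ℕ}

def mergeFirstCols [Add R] (A : Matrix m (Fin (n + 2)) R) : Matrix m (Fin (n + 1)) R :=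
  of fun r j => if j = 0 then A r 0 + A r 1 else A r j.succ

theorem mergeFirstCols_mulVec [NonUnitalNonAssocSemiring R] (A : Matrix m (Fin (n + 2)) R)
    {v : Fin (n + 2) → R} (hv : v 0 = v 1) :
    A.mergeFirstCols *ᵥ (fun j => if j = 0 then v 0 else v j.succ) = A *ᵥ v := by
  ext r
  simp [mergeFirstCols, mulVec, dotProduct, Fin.sum_univ_succ, add_mul, add_assoc, hv]

end MergeFirstCols

end Matrix

/-- **Key induction equation (e-3-Ex123).**  Let `A` be an `r × n` integer matrix (`n ≥ 2`,
here `n + 2` columns `C₀, C₁, …`), and let `A₁ = (C₀, C₀+C₁, C₂, …)`,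
`A₂ = (C₀+C₁, C₁, C₂, …)`, `A₃ = (C₀+C₁, C₂, …)`.  Let `E, E₁, E₂, E₃` be the generating
functions over nonnegative integer solutions of `A, A₁, A₂, A₃` respectively, and let
`S₁ = E₁(x₀, x₀x₁, x₂, …)`, `S₂ = E₂(x₀x₁, x₁, x₂, …)`, `S₃ = E₃(x₀x₁, x₂, …)` denote the
substituted series (described coefficientwise).  Then, as formal power series,
`E = S₁ + S₂ − S₃`. -/
theorem elliott_reduction_generating_function_identity
    (r n : ℕ) (A : Matrix (Fin r) (Fin (n + 2)) ℤ)
    (A₁ A₂ : Matrix (Fin r) (Fin (n + 2)) ℤ) (A₃ : Matrix (Fin r) (Fin (n + 1)) ℤ)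
    (hA₁ : A₁ = Matrix.of fun i j => if j = 1 then A i 0 + A i 1 else A i j)
    (hA₂ : A₂ = Matrix.of fun i j => if j = 0 then A i 0 + A i 1 else A i j)
    (hA₃ : A₃ = Matrix.of fun i (j : Fin (n + 1)) =>
      if j = 0 then A i 0 + A i 1 else A i j.succ)
    (E E₁ E₂ S₁ S₂ S₃ : MvPowerSeries (Fin (n + 2)) ℂ)
    (E₃ : MvPowerSeries (Fin (n + 1)) ℂ)
    (hE : ∀ d : Fin (n + 2) →₀ ℕ, MvPowerSeries.coeff d E =
      if A.mulVec (fun i => (d i : ℤ)) = 0 then 1 else 0)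
    (hE₁ : ∀ d : Fin (n + 2) →₀ ℕ, MvPowerSeries.coeff d E₁ =
      if A₁.mulVec (fun i => (d i : ℤ)) = 0 then 1 else 0)
    (hE₂ : ∀ d : Fin (n + 2) →₀ ℕ, MvPowerSeries.coeff d E₂ =
      if A₂.mulVec (fun i => (d i : ℤ)) = 0 then 1 else 0)
    (hE₃ : ∀ d : Fin (n + 1) →₀ ℕ, MvPowerSeries.coeff d E₃ =
      if A₃.mulVec (fun i => (d i : ℤ)) = 0 then 1 else 0)
    -- `S₁ = E₁(x₀, x₀x₁, x₂, …)` : the monomial `y^α` contributes to `x`-degree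
    -- `(α₀+α₁, α₁, α₂, …)`.
    (hS₁ : ∀ d : Fin (n + 2) →₀ ℕ, MvPowerSeries.coeff d S₁ =
      if d 1 ≤ d 0 then
        MvPowerSeries.coeff
          (Finsupp.equivFunOnFinite.symm fun j => if j = 0 then d 0 - d 1 else d j) E₁
      else 0)
    -- `S₂ = E₂(x₀x₁, x₁, x₂, …)`
    (hS₂ : ∀ d : Fin (n + 2) →₀ ℕ, MvPowerSeries.coeff d S₂ =
      if d 0 ≤ d 1 then
        MvPowerSeries.coeff
          (Finsupp.equivFunOnFinite.symm fun j => if j = 1 then d 1 - d 0 else d j) E₂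
      else 0)
    -- `S₃ = E₃(x₀x₁, x₂, …)`
    (hS₃ : ∀ d : Fin (n + 2) →₀ ℕ, MvPowerSeries.coeff d S₃ =
      if d 0 = d 1 then
        MvPowerSeries.coeff
          (Finsupp.equivFunOnFinite.symm fun k : Fin (n + 1) =>
            if k = 0 then d 0 else d k.succ) E₃
      else 0) :
    E = S₁ + S₂ - S₃ := by
  have hT₁ : A₁ = A * transvection (0 : Fin (n + 2)) 1 (1 : ℤ) := by
    ext r k
    rw [hA₁, of_apply, mul_transvection_one_apply]
  have hT₂ : A₂ = A * transvection (1 : Fin (n + 2)) 0 (1 : ℤ) := by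
    ext r k
    rw [hA₂, of_apply, mul_transvection_one_apply, add_comm (A r 1)]
  have hM : A₃ = A.mergeFirstCols := hA₃
  ext d
  rw [map_sub, map_add, hE, hS₁, hS₂, hS₃, hE₁, hE₂, hE₃]
  simp only [Finsupp.coe_equivFunOnFinite_symm]
  refine (ite_le_add_ite_ge_sub_ite_eq (fun h => ?_) (fun h => ?_) (fun h => ?_)).symm
  · simp only [hT₁, ← mulVec_mulVec, transvection_mulVec_natCast_sub zero_ne_one h]
  · simp only [hT₂, ← mulVec_mulVec, transvection_mulVec_natCast_sub one_ne_zero h]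
  · simp only [hM, Nat.cast_ite,
      mergeFirstCols_mulVec A (v := fun k => (d k : ℤ)) (congrArg Nat.cast h)]
end

section
/- Let A be an r×n integer matrix (n ≥ 2) with columns C₁,…,Cₙ, and define A₂ = (C₁+C₂, C₂, C₃,…,Cₙ) and A₃ = (C₁+C₂, C₃,…,Cₙ). Let Ē = {α ∈ ℙⁿ : Aα = 0} and let Ē₂, Ē₃ denote the sets of positive integer solutions of A₂α = 0 and A₃α = 0 respectively. If Ē is nonempty while Ē₂ and Ē₃ are both empty, then every α ∈ ℕⁿ with Aα = 0 satisfies α₁ ≥ α₂. -/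
/-- **Case 1 claim in the proof of Proposition 2.2 (p-3-recip).**  Let `A` be an `r × n`
integer matrix (`n ≥ 2`, here `n + 2` columns `C₀, C₁, …`), and let
`A₂ = (C₀+C₁, C₁, C₂, …)` and `A₃ = (C₀+C₁, C₂, …)`.  If `Aα = 0` has a strictly positive
integer solution, while neither `A₂α = 0` nor `A₃α = 0` has one, then every nonnegative
integer solution `α` of `Aα = 0` satisfies `α₁ ≥ α₂` (indices `0, 1` here). -/
theorem nonneg_solutions_first_ge_second
    (r n : ℕ) (A : Matrix (Fin r) (Fin (n + 2)) ℤ)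
    (A₂ : Matrix (Fin r) (Fin (n + 2)) ℤ) (A₃ : Matrix (Fin r) (Fin (n + 1)) ℤ)
    (hA₂ : A₂ = Matrix.of fun i j => if j = 0 then A i 0 + A i 1 else A i j)
    (hA₃ : A₃ = Matrix.of fun i (j : Fin (n + 1)) =>
      if j = 0 then A i 0 + A i 1 else A i j.succ)
    (hE : ∃ α : Fin (n + 2) → ℤ, (∀ i, 0 < α i) ∧ A.mulVec α = 0)
    (hE2 : ¬ ∃ α : Fin (n + 2) → ℤ, (∀ i, 0 < α i) ∧ A₂.mulVec α = 0)
    (hE3 : ¬ ∃ α : Fin (n + 1) → ℤ, (∀ i, 0 < α i) ∧ A₃.mulVec α = 0) :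
    ∀ α : Fin (n + 2) → ℤ, (∀ i, 0 ≤ α i) → A.mulVec α = 0 → α 1 ≤ α 0 := by
  subst hA₂
  intro α hα hAα
  by_contra h
  push_neg at h
  obtain ⟨β, hβpos, hβ⟩ := hE
  set N : ℤ := max (β 0 - β 1 + 1) 1 with hN
  have hN1 : (1:ℤ) ≤ N := le_max_right _ _
  have hN2 : β 0 - β 1 + 1 ≤ N := le_max_left _ _
  set γ : Fin (n+2) → ℤ := fun i => N * α i + β i with hγ
  have hγpos : ∀ i, 0 < γ i := fun i => by
    have h1 := mul_nonneg (by linarith : (0:ℤ) ≤ N) (hα i)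
    have h2 := hβpos i
    simp only [hγ]; linarith
  have hγsol : A.mulVec γ = 0 := by
    have hg : γ = N • α + β := by funext i; simp [hγ, smul_eq_mul]
    rw [hg, Matrix.mulVec_add, Matrix.mulVec_smul, hAα, hβ]; simp
  have hlt : γ 0 < γ 1 := by
    have h1 : α 0 + 1 ≤ α 1 := h
    have h2 : N * α 0 + N ≤ N * α 1 := by nlinarith
    simp only [hγ]; linarith
  apply hE2
  refine ⟨fun j => if j = 0 then γ 0 else if j = 1 then γ 1 - γ 0 else γ j, ?_, ?_⟩
  · intro i
    by_cases h0 : i = 0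
    · simp [h0]; exact hγpos 0
    by_cases h1 : i = 1
    · simp [h0, h1]; linarith
    · simp [h0, h1]; exact hγpos i
  · funext i
    have hi := congrFun hγsol i
    simp only [Matrix.mulVec, dotProduct, Pi.zero_apply] at hi ⊢
    rw [Fin.sum_univ_succ, Fin.sum_univ_succ] at hi ⊢
    simp only [Matrix.of_apply, Fin.succ_ne_zero, Fin.succ_succ_ne_one, one_ne_zero, if_false,
      if_true, Fin.succ_zero_eq_one, if_pos rfl] at hi ⊢
    ring_nf
    ring_nf at hi
    linarith
end
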